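/- Let D be a self-adjoint (possibly unbounded) operator on a Hilbert space and A a bounded self-adjoint operator. Setting F_T = T(1 + T²)^{-1/2} for self-adjoint T, one has the norm estimate ‖F_{D+A} − F_D‖ ≤ ‖A‖. Consequently the map A ↦ F_{D+A} is (uniformly) continuous from bounded self-adjoint perturbations to bounded operators. -/

import Mathlib

/-!
For `c > 0`, `t / (c + t²)` is `-½` times the sum of the resolvents `(w - t)⁻¹` at `w = ±i√c`.
For self-adjoint `a` these have norm at most `|Im w|⁻¹`, so the second resolvent identity makes
`t / (c + t²)` operator-Lipschitz with constant `1 / c`. Since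
`t / √(1 + t²) = π⁻¹ ∫ t / (1 + x² + t²) dx` and `∫ (1 + x²)⁻¹ dx = π`, integrating these bounds
over `c = 1 + x²` gives the constant `1`.
-/

/-- The bounded transform `F_T = T(1 + T²)^{-1/2}` of a self-adjoint operator `T`,
defined via the continuous functional calculus. -/
noncomputable def boundedTransform {H : Type*} [NormedAddCommGroup H]
    [InnerProductSpace ℂ H] [CompleteSpace H] (T : H →L[ℂ] H) : H →L[ℂ] H :=
  cfc (fun t : ℝ => t / Real.sqrt (1 + t ^ 2)) T

open Complex Real MeasureTheory

section Resolvent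

variable {A : Type*} [CStarAlgebra A] {a b : A} {w : ℂ}

lemma IsSelfAdjoint.sub_ne_zero_of_mem_spectrum (ha : IsSelfAdjoint a) (hw : w.im ≠ 0) {z : ℂ}
    (hz : z ∈ spectrum ℂ a) : w - z ≠ 0 := fun h =>
  hw (by rw [sub_eq_zero.mp h]; exact ha.im_eq_zero_of_mem_spectrum hz)

lemma IsSelfAdjoint.mem_resolventSet (ha : IsSelfAdjoint a) (hw : w.im ≠ 0) :
    w ∈ resolventSet ℂ a :=
  Set.notMem_compl_iff.mp fun hmem => hw (ha.im_eq_zero_of_mem_spectrum hmem)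

lemma IsSelfAdjoint.continuousOn_inv_sub (ha : IsSelfAdjoint a) (hw : w.im ≠ 0) :
    ContinuousOn (fun z : ℂ => (w - z)⁻¹) (spectrum ℂ a) :=
  (continuousOn_const.sub continuousOn_id).inv₀ fun _ hz => ha.sub_ne_zero_of_mem_spectrum hw hz

lemma IsSelfAdjoint.resolvent_eq_cfc (ha : IsSelfAdjoint a) (hw : w.im ≠ 0) :
    resolvent a w = cfc (fun z : ℂ => (w - z)⁻¹) a := by
  rw [cfc_inv (w - ·) a fun _ => ha.sub_ne_zero_of_mem_spectrum hw,
    cfc_sub (fun _ => w) (fun z => z) a, cfc_const w a, cfc_id' ℂ a, resolvent]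

lemma IsSelfAdjoint.norm_resolvent_le (ha : IsSelfAdjoint a) (hw : w.im ≠ 0) :
    ‖resolvent a w‖ ≤ |w.im|⁻¹ := by
  rw [ha.resolvent_eq_cfc hw]
  refine norm_cfc_le (by positivity) fun z hz => ?_
  rw [norm_inv]
  refine inv_anti₀ (abs_pos.mpr hw) ?_
  calc |w.im| = |(w - z).im| := by rw [sub_im, ha.im_eq_zero_of_mem_spectrum hz, sub_zero]
    _ ≤ ‖w - z‖ := abs_im_le_norm _

lemma IsSelfAdjoint.norm_resolvent_sub_resolvent_le (ha : IsSelfAdjoint a) (hb : IsSelfAdjoint b)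
    (hw : w.im ≠ 0) : ‖resolvent a w - resolvent b w‖ ≤ ‖a - b‖ / w.im ^ 2 := by
  rw [spectrum.resolvent_sub_resolvent (ha.mem_resolventSet hw) (hb.mem_resolventSet hw)]
  calc ‖resolvent a w * (a - b) * resolvent b w‖
      ≤ ‖resolvent a w‖ * ‖a - b‖ * ‖resolvent b w‖ := norm_mul₃_le
    _ ≤ |w.im|⁻¹ * ‖a - b‖ * |w.im|⁻¹ := by
      gcongr
      exacts [ha.norm_resolvent_le hw, hb.norm_resolvent_le hw]
    _ = ‖a - b‖ / w.im ^ 2 := by rw [← sq_abs w.im]; field_simp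

lemma IsSelfAdjoint.cfc_div_add_sq (ha : IsSelfAdjoint a) {c : ℝ} (hc : 0 < c) :
    cfc (fun t : ℝ => t / (c + t ^ 2)) a =
      -(2⁻¹ : ℂ) • (resolvent a (√c * I) + resolvent a (-(√c * I))) := by
  have hs : (√c : ℝ) ≠ 0 := (Real.sqrt_pos.mpr hc).ne'
  have hw₁ : (√c * I : ℂ).im ≠ 0 := by simpa using hs
  have hw₂ : (-(√c * I) : ℂ).im ≠ 0 := by simpa using hs
  rw [ha.resolvent_eq_cfc hw₁, ha.resolvent_eq_cfc hw₂,
    ← cfc_add a (fun z : ℂ => (√c * I - z)⁻¹) (fun z : ℂ => (-(√c * I) - z)⁻¹)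
      (ha.continuousOn_inv_sub hw₁) (ha.continuousOn_inv_sub hw₂),
    ← cfc_smul (-(2⁻¹ : ℂ)) (fun z : ℂ => (√c * I - z)⁻¹ + (-(√c * I) - z)⁻¹) a
      ((ha.continuousOn_inv_sub hw₁).add (ha.continuousOn_inv_sub hw₂)), cfc_real_eq_complex _ ha]
  refine cfc_congr fun z hz => ?_
  have h1 := ha.sub_ne_zero_of_mem_spectrum hw₁ hz
  have h2 := ha.sub_ne_zero_of_mem_spectrum hw₂ hz
  rw [ha.mem_spectrum_eq_re hz] at h1 h2 ⊢
  have h3 : ((c + z.re ^ 2 : ℝ) : ℂ) ≠ 0 := by exact_mod_cast (by positivity : c + z.re ^ 2 ≠ 0)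
  have hsq : ((√c : ℝ) : ℂ) ^ 2 = c := by exact_mod_cast Real.sq_sqrt hc.le
  simp only [ofReal_re, smul_eq_mul]
  push_cast at h3 ⊢
  field_simp
  linear_combination (2 * (z.re : ℂ)) * hsq - 2 * (z.re : ℂ) * ((√c : ℝ) : ℂ) ^ 2 * I_sq

lemma IsSelfAdjoint.norm_cfc_div_add_sq_sub_le (ha : IsSelfAdjoint a) (hb : IsSelfAdjoint b)
    {c : ℝ} (hc : 0 < c) :
    ‖cfc (fun t : ℝ => t / (c + t ^ 2)) a - cfc (fun t : ℝ => t / (c + t ^ 2)) b‖ ≤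
      ‖a - b‖ / c := by
  have hs : (√c : ℝ) ≠ 0 := (Real.sqrt_pos.mpr hc).ne'
  have hw₁ : (√c * I : ℂ).im ≠ 0 := by simpa using hs
  have hw₂ : (-(√c * I) : ℂ).im ≠ 0 := by simpa using hs
  rw [ha.cfc_div_add_sq hc, hb.cfc_div_add_sq hc, ← smul_sub, norm_smul,
    add_sub_add_comm]
  calc ‖-(2⁻¹ : ℂ)‖ * ‖(resolvent a (√c * I) - resolvent b (√c * I)) +
        (resolvent a (-(√c * I)) - resolvent b (-(√c * I)))‖
      ≤ 2⁻¹ * (‖a - b‖ / c + ‖a - b‖ / c) := by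
        rw [norm_neg, norm_inv, Complex.norm_ofNat]
        gcongr
        refine norm_add_le_of_le ?_ ?_
        · simpa [Real.sq_sqrt hc.le] using ha.norm_resolvent_sub_resolvent_le hb hw₁
        · simpa [Real.sq_sqrt hc.le] using ha.norm_resolvent_sub_resolvent_le hb hw₂
    _ = ‖a - b‖ / c := by ring

end Resolvent

lemma integral_inv_add_sq {c : ℝ} (hc : 0 < c) : ∫ x : ℝ, (c + x ^ 2)⁻¹ = π / √c := by
  have hs : 0 < √c := Real.sqrt_pos.mpr hc
  have h : ∀ x : ℝ, (c + x ^ 2)⁻¹ = c⁻¹ * (1 + (x / √c) ^ 2)⁻¹ := fun x => by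
    rw [div_pow, Real.sq_sqrt hc.le, ← mul_inv]; congr 1; field_simp
  simp_rw [h]
  rw [integral_const_mul, Measure.integral_comp_div (fun y : ℝ => (1 + y ^ 2)⁻¹),
    integral_univ_inv_one_add_sq, abs_of_pos hs, smul_eq_mul]
  field_simp
  exact Real.sq_sqrt hc.le

lemma continuous_div_sqrt_one_add_sq : Continuous fun t : ℝ => t / √(1 + t ^ 2) :=
  continuous_id.div (by fun_prop) fun _ => (Real.sqrt_pos.mpr (by positivity)).ne'

lemma integral_div_one_add_sq_add_sq (t : ℝ) :
    ∫ x : ℝ, t / (1 + x ^ 2 + t ^ 2) = π * (t / √(1 + t ^ 2)) := by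
  have h : ∀ x : ℝ, t / (1 + x ^ 2 + t ^ 2) = t * ((1 + t ^ 2) + x ^ 2)⁻¹ := fun x => by ring
  simp_rw [h, integral_const_mul, integral_inv_add_sq (by positivity : 0 < 1 + t ^ 2)]
  ring

lemma continuous_uncurry_div_one_add_sq_add_sq :
    Continuous (Function.uncurry fun x t : ℝ => t / (1 + x ^ 2 + t ^ 2)) :=
  continuous_snd.div (by fun_prop) fun _ => by positivity

lemma spectrum.norm_div_one_add_sq_add_sq_le {A : Type*} [NormedRing A] [NormedAlgebra ℝ A]
    [CompleteSpace A] {a : A} (x : ℝ) {t : ℝ} (ht : t ∈ spectrum ℝ a) :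
    ‖t / (1 + x ^ 2 + t ^ 2)‖ ≤ ‖a‖ * ‖(1 : A)‖ * (1 + x ^ 2)⁻¹ := by
  rw [norm_div, div_eq_mul_inv]
  gcongr
  · exact spectrum.norm_le_norm_mul_of_mem ht
  · rw [Real.norm_of_nonneg (by positivity)]
    nlinarith [sq_nonneg t]

section Integral

variable {A : Type*} [CStarAlgebra A] {a b : A}

lemma IsSelfAdjoint.integrable_cfc_div_one_add_sq_add_sq (ha : IsSelfAdjoint a) :
    Integrable fun x : ℝ => cfc (fun t : ℝ => t / (1 + x ^ 2 + t ^ 2)) a :=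
  integrable_cfc _ (fun x => ‖a‖ * ‖(1 : A)‖ * (1 + x ^ 2)⁻¹) a
    continuous_uncurry_div_one_add_sq_add_sq.continuousOn
    (.of_forall fun x _ ht => spectrum.norm_div_one_add_sq_add_sq_le x ht)
    (integrable_inv_one_add_sq.const_mul _).hasFiniteIntegral ha

lemma IsSelfAdjoint.cfc_div_sqrt_one_add_sq_eq_integral (ha : IsSelfAdjoint a) :
    cfc (fun t : ℝ => t / √(1 + t ^ 2)) a =
      π⁻¹ • ∫ x : ℝ, cfc (fun t : ℝ => t / (1 + x ^ 2 + t ^ 2)) a := by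
  rw [← cfc_integral _ (fun x => ‖a‖ * ‖(1 : A)‖ * (1 + x ^ 2)⁻¹) a
    continuous_uncurry_div_one_add_sq_add_sq.continuousOn
    (.of_forall fun x _ ht => spectrum.norm_div_one_add_sq_add_sq_le x ht)
    (integrable_inv_one_add_sq.const_mul _).hasFiniteIntegral ha]
  simp_rw [integral_div_one_add_sq_add_sq]
  rw [cfc_const_mul _ _ a continuous_div_sqrt_one_add_sq.continuousOn, smul_smul,
    inv_mul_cancel₀ pi_ne_zero, one_smul]

theorem IsSelfAdjoint.norm_cfc_div_sqrt_one_add_sq_sub_le (ha : IsSelfAdjoint a)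
    (hb : IsSelfAdjoint b) :
    ‖cfc (fun t : ℝ => t / √(1 + t ^ 2)) a - cfc (fun t : ℝ => t / √(1 + t ^ 2)) b‖ ≤ ‖a - b‖ := by
  rw [ha.cfc_div_sqrt_one_add_sq_eq_integral, hb.cfc_div_sqrt_one_add_sq_eq_integral, ← smul_sub,
    ← integral_sub ha.integrable_cfc_div_one_add_sq_add_sq hb.integrable_cfc_div_one_add_sq_add_sq,
    norm_smul, norm_inv, norm_of_nonneg pi_pos.le]
  calc π⁻¹ * ‖∫ x : ℝ, (cfc (fun t : ℝ => t / (1 + x ^ 2 + t ^ 2)) a -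
        cfc (fun t : ℝ => t / (1 + x ^ 2 + t ^ 2)) b)‖
      ≤ π⁻¹ * ∫ x : ℝ, ‖a - b‖ * (1 + x ^ 2)⁻¹ := by
        gcongr
        refine norm_integral_le_of_norm_le (integrable_inv_one_add_sq.const_mul _)
          (.of_forall fun x => ?_)
        simpa only [div_eq_mul_inv] using ha.norm_cfc_div_add_sq_sub_le hb (by positivity)
    _ = ‖a - b‖ := by
        rw [integral_const_mul, integral_univ_inv_one_add_sq]
        field_simp [pi_ne_zero]

end Integral

section BoundedTransform

variable {H : Type*} [NormedAddCommGroup H] [InnerProductSpace ℂ H] [CompleteSpace H]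
  {S T : H →L[ℂ] H}

theorem IsSelfAdjoint.norm_boundedTransform_sub_le (hS : IsSelfAdjoint S) (hT : IsSelfAdjoint T) :
    ‖boundedTransform S - boundedTransform T‖ ≤ ‖S - T‖ :=
  hS.norm_cfc_div_sqrt_one_add_sq_sub_le hT

theorem IsSelfAdjoint.lipschitzWith_boundedTransform_add (hT : IsSelfAdjoint T) :
    LipschitzWith 1 fun A : selfAdjoint (H →L[ℂ] H) => boundedTransform (T + (A : H →L[ℂ] H)) :=
  LipschitzWith.of_dist_le_mul fun A B => by
    simpa [dist_eq_norm, Subtype.dist_eq] using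
      (hT.add A.2).norm_boundedTransform_sub_le (hT.add B.2)

end BoundedTransform

/-- For a self-adjoint operator `D` and a bounded self-adjoint
perturbation `A`, the bounded transforms satisfy `‖F_{D+A} − F_D‖ ≤ ‖A‖`; consequently
`A ↦ F_{D+A}` is continuous (indeed `1`-Lipschitz) from bounded self-adjoint
perturbations to bounded operators. -/
theorem boundedTransform_norm_estimate
    {H : Type*} [NormedAddCommGroup H] [InnerProductSpace ℂ H] [CompleteSpace H]
    (D : H →L[ℂ] H) (hD : IsSelfAdjoint D) :
    (∀ A : H →L[ℂ] H, IsSelfAdjoint A →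
      ‖boundedTransform (D + A) - boundedTransform D‖ ≤ ‖A‖) ∧
    LipschitzWith 1 (fun A : selfAdjoint (H →L[ℂ] H) =>
      boundedTransform (D + (A : H →L[ℂ] H))) ∧
    Continuous (fun A : selfAdjoint (H →L[ℂ] H) =>
      boundedTransform (D + (A : H →L[ℂ] H))) := by
  refine ⟨fun A hA => ?_, hD.lipschitzWith_boundedTransform_add,
    hD.lipschitzWith_boundedTransform_add.continuous⟩
  simpa using (hD.add hA).norm_boundedTransform_sub_le hD
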